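/- arXiv:1505.02627 — 3 statements merged into one kernel-verified Lean document; each statement's English description precedes it below -/
import Mathlib

section
/- There exist constants C₁ > 0 and C₂ > 0 (depending only on μ) such that for all sufficiently large n and every integer j with m₁ ≤ j ≤ m₂: C₁ n^{−2β} ρ^{2/(μ+1)} l_*^{(μ−1)/(μ+1)} ≤ Δλ_j ≤ C₂ n^{−2β} ρ^{2/(μ+1)} (l^*)^{(μ−1)/(μ+1)}. -/
/-- λ₀ = ρ √n · 2√μ/(μ+1). -/
noncomputable def lam0 (μ ρ : ℝ) (n : ℕ) : ℝ :=
  ρ * Real.sqrt n * (2 * Real.sqrt μ / (μ + 1))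

/-- Trading times t_j = 1 − (1 − j/n)^μ. -/
noncomputable def tradeT (μ : ℝ) (n j : ℕ) : ℝ :=
  1 - (1 - (j : ℝ) / n) ^ μ

/-- λ_j = λ₀ (1 − j/n)^{(μ+1)/2}. -/
noncomputable def lamJ (μ ρ : ℝ) (n j : ℕ) : ℝ :=
  lam0 μ ρ n * (1 - (j : ℝ) / n) ^ ((μ + 1) / 2)

/-- Δλ_j = λ_{j−1} − λ_j. -/
noncomputable def dLam (μ ρ : ℝ) (n j : ℕ) : ℝ :=
  lamJ μ ρ n (j - 1) - lamJ μ ρ n j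

/-- Δt_j = t_j − t_{j−1}. -/
noncomputable def dT (μ : ℝ) (n j : ℕ) : ℝ :=
  tradeT μ n j - tradeT μ n (j - 1)

/-- l_* = (log n)^{−3}. -/
noncomputable def lStar (n : ℕ) : ℝ := ((Real.log n) ^ (3 : ℕ))⁻¹

/-- l^* = (log n)^3. -/
noncomputable def lUpStar (n : ℕ) : ℝ := (Real.log n) ^ (3 : ℕ)

/-- m₁ = n − ⌊n (l^*/λ₀)^{2/(μ+1)}⌋. -/
noncomputable def mLow (μ ρ : ℝ) (n : ℕ) : ℕ :=
  n - ⌊(n : ℝ) * (lUpStar n / lam0 μ ρ n) ^ ((2 : ℝ) / (μ + 1))⌋₊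

/-- m₂ = n − ⌊n (l_*/λ₀)^{2/(μ+1)}⌋. -/
noncomputable def mUp (μ ρ : ℝ) (n : ℕ) : ℕ :=
  n - ⌊(n : ℝ) * (lStar n / lam0 μ ρ n) ^ ((2 : ℝ) / (μ + 1))⌋₊

/-!
With `α = (μ + 1) / 2` and `x = 1 - j / n` we have `Δλ_j = λ₀ ((x + 1/n)^α - x^α)`, and by
convexity of `x ↦ x^α` this increment lies between `λ₀ α x^(α-1) / n` and
`λ₀ α (x + 1/n)^(α-1) / n`. Writing `A = (l / λ₀)^(1/α)` for `l = l_*, l^*`, the index range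
`m₁ ≤ j ≤ m₂` means `A_* - 1/n ≤ x ≤ A^*`. Since `l^*` is polylogarithmic while `λ₀ ≍ √n`,
for large `n` we have `A^* < 1` and `2/n ≤ A_*`, so `x ≥ A_*/2` and `x + 1/n ≤ 2 A^*`. Finally
`λ₀ A^(α-1) / n = λ₀^(1/α) l^(1-1/α) / n`, which is `(2√μ/(μ+1))^(2/(μ+1)) n^(-2β) ρ^(2/(μ+1))`
times `l^((μ-1)/(μ+1))`.
-/

open Real Filter

section RpowIncrement

variable {α x y z δ A Λ l l₁ l₂ : ℝ}

theorem rpow_tangent_line_le (hα : 1 ≤ α) (hy : 0 < y) (hz : 0 ≤ z) :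
    y ^ α + α * y ^ (α - 1) * (z - y) ≤ z ^ α := by
  have hs : -1 ≤ z / y - 1 := by linarith [div_nonneg hz hy.le]
  calc y ^ α + α * y ^ (α - 1) * (z - y) = y ^ α * (1 + α * (z / y - 1)) := by
        rw [rpow_sub_one hy.ne']; field_simp
    _ ≤ y ^ α * (1 + (z / y - 1)) ^ α := by
        gcongr; exact one_add_mul_self_le_rpow_one_add hs hα
    _ = z ^ α := by
        rw [add_sub_cancel, div_rpow hz hy.le]; field_simp [(rpow_pos_of_pos hy α).ne']

theorem mul_rpow_sub_one_le_rpow_add_sub_rpow (hα : 1 ≤ α) (hA : 0 < A) (hAx : A ≤ 2 * x)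
    (hδ : 0 ≤ δ) : α * (1 / 2) ^ (α - 1) * A ^ (α - 1) * δ ≤ (x + δ) ^ α - x ^ α := by
  have hx : 0 < x := by linarith
  have hxα : (1 / 2) ^ (α - 1) * A ^ (α - 1) ≤ x ^ (α - 1) := by
    rw [← mul_rpow (by norm_num) hA.le]
    exact rpow_le_rpow (by positivity) (by linarith) (by linarith)
  calc α * (1 / 2) ^ (α - 1) * A ^ (α - 1) * δ
      = α * ((1 / 2) ^ (α - 1) * A ^ (α - 1)) * δ := by ring
    _ ≤ α * x ^ (α - 1) * δ := by gcongr
    _ ≤ (x + δ) ^ α - x ^ α := by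
        linear_combination rpow_tangent_line_le hα hx (by linarith : 0 ≤ x + δ)

theorem rpow_add_sub_rpow_le_mul_rpow_sub_one (hα : 1 ≤ α) (hx : 0 ≤ x) (hxA : x ≤ A)
    (hδ : 0 < δ) (hδA : δ ≤ A) : (x + δ) ^ α - x ^ α ≤ α * 2 ^ (α - 1) * A ^ (α - 1) * δ := by
  have hxδ : (x + δ) ^ (α - 1) ≤ 2 ^ (α - 1) * A ^ (α - 1) := by
    rw [← mul_rpow (by norm_num) (by linarith)]
    exact rpow_le_rpow (by linarith) (by linarith) (by linarith)
  calc (x + δ) ^ α - x ^ α ≤ α * (x + δ) ^ (α - 1) * δ := by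
        linear_combination rpow_tangent_line_le hα (by linarith : 0 < x + δ) hx
    _ ≤ α * (2 ^ (α - 1) * A ^ (α - 1)) * δ := by gcongr
    _ = α * 2 ^ (α - 1) * A ^ (α - 1) * δ := by ring

theorem mul_div_rpow_inv_rpow_sub_one (hΛ : 0 < Λ) (hl : 0 ≤ l) (hα : α ≠ 0) :
    Λ * ((l / Λ) ^ α⁻¹) ^ (α - 1) = Λ ^ α⁻¹ * l ^ (1 - α⁻¹) := by
  rw [← rpow_mul (div_nonneg hl hΛ.le), div_rpow hl hΛ.le,
    show α⁻¹ * (α - 1) = 1 - α⁻¹ by field_simp, rpow_sub hΛ, rpow_one]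
  field_simp

theorem mul_rpow_increment_bounds (hα : 1 ≤ α) (hΛ : 0 < Λ) (hl₁ : 0 < l₁) (hl₂ : 0 ≤ l₂)
    (hδ : 0 < δ) (hδA : 2 * δ ≤ (l₁ / Λ) ^ α⁻¹) (hx₁ : (l₁ / Λ) ^ α⁻¹ - δ ≤ x)
    (hx₂ : x ≤ (l₂ / Λ) ^ α⁻¹) :
    α * (1 / 2) ^ (α - 1) * Λ ^ α⁻¹ * l₁ ^ (1 - α⁻¹) * δ ≤ Λ * ((x + δ) ^ α - x ^ α) ∧
      Λ * ((x + δ) ^ α - x ^ α) ≤ α * 2 ^ (α - 1) * Λ ^ α⁻¹ * l₂ ^ (1 - α⁻¹) * δ := by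
  have hα₀ : α ≠ 0 := by positivity
  have hA₁ : 0 < (l₁ / Λ) ^ α⁻¹ := by positivity
  constructor
  · calc α * (1 / 2) ^ (α - 1) * Λ ^ α⁻¹ * l₁ ^ (1 - α⁻¹) * δ
        = Λ * (α * (1 / 2) ^ (α - 1) * ((l₁ / Λ) ^ α⁻¹) ^ (α - 1) * δ) := by
          linear_combination
            (-α * (1 / 2) ^ (α - 1) * δ) * mul_div_rpow_inv_rpow_sub_one hΛ hl₁.le hα₀
      _ ≤ Λ * ((x + δ) ^ α - x ^ α) := by
          gcongr; exact mul_rpow_sub_one_le_rpow_add_sub_rpow hα hA₁ (by linarith) hδ.le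
  · calc Λ * ((x + δ) ^ α - x ^ α)
        ≤ Λ * (α * 2 ^ (α - 1) * ((l₂ / Λ) ^ α⁻¹) ^ (α - 1) * δ) := by
          gcongr
          exact rpow_add_sub_rpow_le_mul_rpow_sub_one hα (by linarith) hx₂ hδ (by linarith)
      _ = α * 2 ^ (α - 1) * Λ ^ α⁻¹ * l₂ ^ (1 - α⁻¹) * δ := by
          linear_combination (α * 2 ^ (α - 1) * δ) * mul_div_rpow_inv_rpow_sub_one hΛ hl₂ hα₀

end RpowIncrement

section FloorIndex

variable {n j : ℕ} {A : ℝ}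

theorem one_sub_div_le_of_sub_floor_le (hn : 0 < n) (hA : 0 ≤ A)
    (h : n - ⌊(n : ℝ) * A⌋₊ ≤ j) : 1 - (j : ℝ) / n ≤ A := by
  have hn' : (0 : ℝ) < n := by exact_mod_cast hn
  have hj : (n : ℝ) ≤ j + ⌊(n : ℝ) * A⌋₊ := by exact_mod_cast (by omega : n ≤ j + _)
  have hfloor := Nat.floor_le (by positivity : 0 ≤ (n : ℝ) * A)
  rw [one_sub_div hn'.ne', div_le_iff₀ hn']
  linarith

theorem sub_inv_lt_one_sub_div_of_le_sub_floor (hj : 0 < j) (h : j ≤ n - ⌊(n : ℝ) * A⌋₊) :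
    A - 1 / n < 1 - (j : ℝ) / n := by
  have hn : (0 : ℝ) < n := by exact_mod_cast (by omega : 0 < n)
  have hjn : (⌊(n : ℝ) * A⌋₊ : ℝ) + j ≤ n := by exact_mod_cast (by omega : _ + j ≤ n)
  have hfloor := Nat.sub_one_lt_floor ((n : ℝ) * A)
  calc A - 1 / n = ((n : ℝ) * A - 1) / n := by field_simp
    _ < ((n : ℝ) - j) / n := div_lt_div_of_pos_right (by linarith) hn
    _ = 1 - (j : ℝ) / n := by field_simp

end FloorIndex

section Model

variable {μ ρ : ℝ} {n j : ℕ}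

theorem dLam_eq (hj : 0 < j) :
    dLam μ ρ n j = lam0 μ ρ n *
      ((1 - (j : ℝ) / n + 1 / n) ^ ((μ + 1) / 2) - (1 - (j : ℝ) / n) ^ ((μ + 1) / 2)) := by
  rw [dLam, lamJ, lamJ, Nat.cast_pred hj, sub_div]
  ring_nf

theorem lam0_rpow_div (hμ : 0 < μ + 1) (hρ : 0 ≤ ρ) (hn : 0 < n) :
    lam0 μ ρ n ^ (2 / (μ + 1)) / n = (2 * √μ / (μ + 1)) ^ (2 / (μ + 1))
      * (n : ℝ) ^ (-(2 * (μ / (2 * (μ + 1))))) * ρ ^ (2 / (μ + 1)) := by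
  have hn' : (0 : ℝ) < n := by exact_mod_cast hn
  have hexp : -(2 * (μ / (2 * (μ + 1)))) = 2 / (μ + 1) / 2 - 1 := by field_simp; ring
  rw [lam0, mul_rpow (by positivity) (by positivity), mul_rpow hρ (sqrt_nonneg _), sqrt_eq_rpow,
    ← rpow_mul hn'.le, hexp, rpow_sub hn', rpow_one]
  ring_nf

theorem lam0_pos (hμ : 0 < μ) (hρ : 0 < ρ) (hn : 0 < n) : 0 < lam0 μ ρ n := by
  have hn' : (0 : ℝ) < n := by exact_mod_cast hn
  unfold lam0
  positivity

theorem dLam_bounds_of_lUpStar_lt (hμ : 1 ≤ μ) (hρ : 0 < ρ) (hn : 2 ≤ n)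
    (hUp : lUpStar n < lam0 μ ρ n) (hA : 2 / (n : ℝ) ≤ (lStar n / lam0 μ ρ n) ^ (2 / (μ + 1)))
    (hj₁ : mLow μ ρ n ≤ j) (hj₂ : j ≤ mUp μ ρ n) :
    (μ + 1) / 2 * (1 / 2) ^ ((μ + 1) / 2 - 1) * (lam0 μ ρ n ^ (2 / (μ + 1)) / n)
        * lStar n ^ ((μ - 1) / (μ + 1)) ≤ dLam μ ρ n j ∧
      dLam μ ρ n j ≤ (μ + 1) / 2 * 2 ^ ((μ + 1) / 2 - 1) * (lam0 μ ρ n ^ (2 / (μ + 1)) / n)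
        * lUpStar n ^ ((μ - 1) / (μ + 1)) := by
  have hlog : 0 < log n := log_pos (by exact_mod_cast hn)
  have hlam : 0 < lam0 μ ρ n := lam0_pos (by linarith) hρ (by omega)
  have hlStar : 0 < lStar n := by unfold lStar; positivity
  have hlUp : 0 < lUpStar n := by unfold lUpStar; positivity
  have hinv : ((μ + 1) / 2)⁻¹ = 2 / (μ + 1) := inv_div _ _
  have hinv' : 1 - ((μ + 1) / 2)⁻¹ = (μ - 1) / (μ + 1) := by rw [hinv]; field_simp; ring
  have hx₂ := one_sub_div_le_of_sub_floor_le (by omega)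
    (rpow_nonneg (div_nonneg hlUp.le hlam.le) _) hj₁
  have hj : 0 < j := by
    have : (lUpStar n / lam0 μ ρ n) ^ (2 / (μ + 1)) < 1 :=
      rpow_lt_one (div_nonneg hlUp.le hlam.le) ((div_lt_one hlam).mpr hUp) (by positivity)
    by_contra! h0
    rw [Nat.le_zero.mp h0, Nat.cast_zero, zero_div, sub_zero] at hx₂
    linarith
  have hx₁ := sub_inv_lt_one_sub_div_of_le_sub_floor hj hj₂
  rw [dLam_eq hj, ← hinv, ← hinv']
  rw [← hinv] at hx₁ hx₂ hA
  obtain ⟨hlow, hup⟩ := mul_rpow_increment_bounds (by linarith) hlam hlStar hlUp.le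
    (by positivity : (0 : ℝ) < 1 / n) (by rwa [mul_one_div]) hx₁.le hx₂
  exact ⟨by convert hlow using 1; ring, by convert hup using 1; ring⟩

end Model

section Asymptotics

theorem eventually_log_pow_le_mul_sqrt (k : ℕ) {c : ℝ} (hc : 0 < c) :
    ∀ᶠ n : ℕ in atTop, log n ^ k ≤ c * √n := by
  have h := (isLittleO_log_rpow_rpow_atTop (k : ℝ) (one_half_pos : (0 : ℝ) < 1 / 2)).def hc
  refine (tendsto_natCast_atTop_atTop (R := ℝ)).eventually (p := fun x ↦ log x ^ k ≤ c * √x) ?_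
  filter_upwards [h, eventually_ge_atTop 1] with x hx hx1
  rwa [rpow_natCast, norm_of_nonneg (pow_nonneg (log_nonneg hx1) k),
    norm_of_nonneg (rpow_nonneg (by linarith) _), ← sqrt_eq_rpow] at hx

variable {μ ρ : ℝ}

theorem eventually_lUpStar_lt_lam0 (hμ : 0 < μ) (hρ : 0 < ρ) :
    ∀ᶠ n : ℕ in atTop, lUpStar n < lam0 μ ρ n := by
  have hc : 0 < ρ * (2 * √μ / (μ + 1)) / 2 := by positivity
  filter_upwards [eventually_log_pow_le_mul_sqrt 3 hc, eventually_ge_atTop 1] with n hlog hn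
  have := lam0_pos hμ hρ hn
  unfold lUpStar
  unfold lam0 at this ⊢
  linarith

theorem eventually_two_div_le_rpow (hμ : 1 ≤ μ) (hρ : 0 < ρ) :
    ∀ᶠ n : ℕ in atTop, 2 / (n : ℝ) ≤ (lStar n / lam0 μ ρ n) ^ (2 / (μ + 1)) := by
  set α := (μ + 1) / 2 with hα_def
  set c := ρ * (2 * √μ / (μ + 1)) with hc_def
  have hα : 1 ≤ α := by rw [hα_def]; linarith
  have hc : 0 < c := by
    have : 0 < μ := by linarith
    positivity
  filter_upwards [eventually_log_pow_le_mul_sqrt 3 (by positivity : 0 < 1 / (2 ^ α * c)),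
    eventually_ge_atTop 2] with n hlog hn
  have hn' : (2 : ℝ) ≤ n := by exact_mod_cast hn
  have hL : 0 < log n ^ 3 := pow_pos (log_pos (by linarith)) 3
  have hsqrt : 0 < √(n : ℝ) := sqrt_pos.2 (by linarith)
  have hkey : 2 ^ α * c * log n ^ 3 * √n ≤ n := by
    have h : 2 ^ α * c * log n ^ 3 ≤ √n := by
      calc 2 ^ α * c * log n ^ 3 ≤ 2 ^ α * c * (1 / (2 ^ α * c) * √n) := by gcongr
        _ = √n := by field_simp
    calc 2 ^ α * c * log n ^ 3 * √n ≤ √n * √n := by gcongr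
      _ = n := mul_self_sqrt (Nat.cast_nonneg n)
  have hz : lStar n / lam0 μ ρ n = 1 / (c * log n ^ 3 * √n) := by
    unfold lStar lam0; rw [hc_def]; field_simp
  have hz₀ : 0 ≤ lStar n / lam0 μ ρ n := by rw [hz]; positivity
  rw [← inv_div (μ + 1) 2, le_rpow_inv_iff_of_pos (by positivity) hz₀ (by positivity)]
  calc (2 / (n : ℝ)) ^ α = 2 ^ α / n ^ α := div_rpow (by norm_num) (by linarith) α
    _ ≤ 2 ^ α / n := by gcongr; exact self_le_rpow_of_one_le (by linarith) hα
    _ ≤ lStar n / lam0 μ ρ n := by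
        rw [hz, div_le_div_iff₀ (by linarith) (by positivity)]
        linarith

end Asymptotics

theorem dLam_bounds_general (μ ρ : ℝ) (hμ1 : 1 ≤ μ) (hρ : 0 < ρ) :
    ∃ C₁ C₂ : ℝ, 0 < C₁ ∧ 0 < C₂ ∧ ∃ N : ℕ, ∀ n : ℕ, N ≤ n → ∀ j : ℕ,
      mLow μ ρ n ≤ j → j ≤ mUp μ ρ n →
        C₁ * (n : ℝ) ^ (-(2 * (μ / (2 * (μ + 1))))) * ρ ^ ((2 : ℝ) / (μ + 1))
            * lStar n ^ ((μ - 1) / (μ + 1)) ≤ dLam μ ρ n j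
        ∧ dLam μ ρ n j ≤ C₂ * (n : ℝ) ^ (-(2 * (μ / (2 * (μ + 1)))))
            * ρ ^ ((2 : ℝ) / (μ + 1)) * lUpStar n ^ ((μ - 1) / (μ + 1)) := by
  have hμ0 : 0 < μ := by linarith
  refine ⟨(μ + 1) / 2 * (1 / 2) ^ ((μ + 1) / 2 - 1) * (2 * √μ / (μ + 1)) ^ (2 / (μ + 1)),
    (μ + 1) / 2 * 2 ^ ((μ + 1) / 2 - 1) * (2 * √μ / (μ + 1)) ^ (2 / (μ + 1)),
    by positivity, by positivity, ?_⟩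
  obtain ⟨N, hN⟩ := eventually_atTop.mp ((eventually_ge_atTop 2).and
    ((eventually_lUpStar_lt_lam0 hμ0 hρ).and (eventually_two_div_le_rpow hμ1 hρ)))
  refine ⟨N, fun n hn j hj₁ hj₂ => ?_⟩
  obtain ⟨hn2, hUp, hA⟩ := hN n hn
  obtain ⟨hlow, hup⟩ := dLam_bounds_of_lUpStar_lt hμ1 hρ hn2 hUp hA hj₁ hj₂
  rw [lam0_rpow_div (by linarith) hρ.le (by omega)] at hlow hup
  exact ⟨by linarith, by linarith⟩

theorem dLam_bounds (μ ρ : ℝ) (hμ1 : 1 ≤ μ) (hμ2 : μ < 2) (hρ : 0 < ρ) :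
    ∃ C₁ C₂ : ℝ, 0 < C₁ ∧ 0 < C₂ ∧ ∃ N : ℕ, ∀ n : ℕ, N ≤ n → ∀ j : ℕ,
      mLow μ ρ n ≤ j → j ≤ mUp μ ρ n →
        C₁ * (n : ℝ) ^ (-(2 * (μ / (2 * (μ + 1))))) * ρ ^ ((2 : ℝ) / (μ + 1))
            * lStar n ^ ((μ - 1) / (μ + 1)) ≤ dLam μ ρ n j
        ∧ dLam μ ρ n j ≤ C₂ * (n : ℝ) ^ (-(2 * (μ / (2 * (μ + 1)))))
            * ρ ^ ((2 : ℝ) / (μ + 1)) * lUpStar n ^ ((μ - 1) / (μ + 1)) :=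
  dLam_bounds_general μ ρ hμ1 hρ
end

section
/- The ratio Δλ_j / √(Δt_j) converges to ρ uniformly over the trading range: lim_{n→∞} sup_{m₁ ≤ j ≤ m₂} | Δλ_j (Δt_j)^{−1/2} − ρ | = 0. -/
/-! With `k = n - j` and `p = (μ + 1) / 2`, the powers of `n` cancel exactly
(as `p - μ / 2 = 1 / 2`) and `Δλ_j / √Δt_j = ρ · (2√μ / (μ + 1)) · ((k + 1)^p - k^p) / √((k + 1)^μ - k^μ)`.
Since `(k + 1)^q - k^q ∼ q k^(q - 1)` (the derivative of `x^q` at `1`), this tends to `ρ` as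
`k → ∞`, uniformly on the trading range: there `k ≥ n - m₂`, which grows like `n^(μ/(μ+1))` up to
powers of `log n`, and `j ≥ m₁ ≥ 1` eventually because `(log n)^3 = o(√n)`. -/

open Filter Real Topology

theorem tendsto_succ_rpow_sub_rpow_mul_rpow_one_sub (q : ℝ) :
    Tendsto (fun k : ℕ => (((k : ℝ) + 1) ^ q - (k : ℝ) ^ q) * (k : ℝ) ^ (1 - q)) atTop
      (𝓝 q) := by
  have hslope :=
    (hasDerivAt_rpow_const (x := 1) (p := q) (Or.inl one_ne_zero)).tendsto_slope_zero_right
  have hinv : Tendsto (fun k : ℕ => (k : ℝ)⁻¹) atTop (𝓝[>] 0) :=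
    tendsto_inv_atTop_nhdsGT_zero.comp tendsto_natCast_atTop_atTop
  have hseq : Tendsto (fun k : ℕ => (k : ℝ) * ((1 + (k : ℝ)⁻¹) ^ q - 1)) atTop (𝓝 q) := by
    simpa [Function.comp_def] using hslope.comp hinv
  refine hseq.congr' ?_
  filter_upwards [eventually_gt_atTop 0] with k hk
  have hk : (0 : ℝ) < k := by exact_mod_cast hk
  have hsucc : (k : ℝ) + 1 = k * (1 + (k : ℝ)⁻¹) := by field_simp
  rw [hsucc, mul_rpow hk.le (by positivity), ← mul_sub_one, mul_right_comm, ← rpow_add hk,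
    add_sub_cancel, rpow_one, mul_comm]

noncomputable def rpowIncrementRatio (p q : ℝ) (k : ℕ) : ℝ :=
  (((k : ℝ) + 1) ^ p - (k : ℝ) ^ p) / √(((k : ℝ) + 1) ^ q - (k : ℝ) ^ q)

theorem tendsto_rpowIncrementRatio {p q : ℝ} (hpq : 2 * p = q + 1) (hq : 0 < q) :
    Tendsto (rpowIncrementRatio p q) atTop (𝓝 (p / √q)) := by
  have hlim := (tendsto_succ_rpow_sub_rpow_mul_rpow_one_sub p).div
    (tendsto_succ_rpow_sub_rpow_mul_rpow_one_sub q).sqrt (sqrt_ne_zero'.2 hq)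
  refine hlim.congr' ?_
  filter_upwards [eventually_gt_atTop 0] with k hk
  have hk : (0 : ℝ) < k := by exact_mod_cast hk
  have hsqrt : √((k : ℝ) ^ (1 - q)) = (k : ℝ) ^ (1 - p) := by
    rw [sqrt_eq_rpow, ← rpow_mul hk.le]; congr 1; linarith
  rw [Pi.div_apply, rpowIncrementRatio, sqrt_mul' _ (by positivity), hsqrt,
    mul_div_mul_right _ _ (rpow_pos_of_pos hk _).ne']

theorem rpow_add_one_div_two {x : ℝ} (hx : 0 < x) (a : ℝ) :
    x ^ ((a + 1) / 2) = x ^ (a / 2) * √x := by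
  rw [sqrt_eq_rpow, ← rpow_add hx]; ring_nf

theorem lam0_eq (μ ρ : ℝ) (n : ℕ) : lam0 μ ρ n = ρ * (2 * √μ / (μ + 1)) * √n := by
  rw [lam0]; ring

theorem dLam_mul_inv_sqrt_dT (μ ρ : ℝ) {n j : ℕ} (hj : 1 ≤ j) (hjn : j ≤ n) :
    dLam μ ρ n j * (√(dT μ n j))⁻¹ =
      ρ * (2 * √μ / (μ + 1)) * rpowIncrementRatio ((μ + 1) / 2) μ (n - j) := by
  rw [rpowIncrementRatio]
  have hn : (0 : ℝ) < n := by exact_mod_cast (show 0 < n by omega)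
  set k : ℝ := ((n - j : ℕ) : ℝ) with hk
  have hk0 : 0 ≤ k := Nat.cast_nonneg _
  have hkj : k = n - j := by rw [hk, Nat.cast_sub hjn]
  have hcurr : 1 - (j : ℝ) / n = k / n := by field_simp; rw [hkj]
  have hprev : 1 - ((j - 1 : ℕ) : ℝ) / n = (k + 1) / n := by
    rw [Nat.cast_sub hj, hkj]; field_simp; ring
  have hdLam : dLam μ ρ n j = lam0 μ ρ n *
      (((k + 1) ^ ((μ + 1) / 2) - k ^ ((μ + 1) / 2)) / (n : ℝ) ^ ((μ + 1) / 2)) := by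
    rw [dLam, lamJ, lamJ, hcurr, hprev, div_rpow (by positivity) hn.le, div_rpow hk0 hn.le]
    ring
  have hdT : dT μ n j = ((k + 1) ^ μ - k ^ μ) / (n : ℝ) ^ μ := by
    rw [dT, tradeT, tradeT, hcurr, hprev, div_rpow hk0 hn.le, div_rpow (by positivity) hn.le]
    ring
  have hsqrt : √((n : ℝ) ^ μ) = (n : ℝ) ^ (μ / 2) := by
    rw [sqrt_eq_rpow, ← rpow_mul hn.le]; ring_nf
  have : (0 : ℝ) < √n := sqrt_pos.2 hn
  have : (0 : ℝ) < (n : ℝ) ^ (μ / 2) := rpow_pos_of_pos hn _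
  rw [hdLam, hdT, sqrt_div' _ (by positivity), hsqrt, rpow_add_one_div_two hn, lam0]
  field_simp

theorem tendsto_log_pow_div_rpow_atTop (k : ℕ) {s : ℝ} (hs : 0 < s) :
    Tendsto (fun x => log x ^ k / x ^ s) atTop (𝓝 0) := by
  simpa using (isLittleO_log_rpow_rpow_atTop k hs).tendsto_div_nhds_zero

theorem eventually_one_le_mLow {μ ρ : ℝ} (hμ : 0 < μ) (hρ : 0 < ρ) :
    ∀ᶠ n : ℕ in atTop, 1 ≤ mLow μ ρ n := by
  have hC : 0 < ρ * (2 * √μ / (μ + 1)) := by positivity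
  have hsmall := ((tendsto_log_pow_div_rpow_atTop 3 one_half_pos).comp
    tendsto_natCast_atTop_atTop).eventually (eventually_lt_nhds hC)
  filter_upwards [hsmall, eventually_gt_atTop 0] with n hlt hn
  have hn : (0 : ℝ) < n := by exact_mod_cast hn
  have hL : 0 ≤ lUpStar n := pow_nonneg (log_natCast_nonneg n) 3
  have hlam : lUpStar n < lam0 μ ρ n := by
    rwa [Function.comp_apply, ← sqrt_eq_rpow, div_lt_iff₀ (sqrt_pos.2 hn), ← lam0_eq] at hlt
  have hr0 : 0 ≤ lUpStar n / lam0 μ ρ n := div_nonneg hL (hL.trans hlam.le)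
  have hratio : (lUpStar n / lam0 μ ρ n) ^ ((2 : ℝ) / (μ + 1)) < 1 :=
    rpow_lt_one hr0 ((div_lt_one (hL.trans_lt hlam)).2 hlam) (div_pos two_pos (by linarith))
  have hfloor : ⌊(n : ℝ) * (lUpStar n / lam0 μ ρ n) ^ ((2 : ℝ) / (μ + 1))⌋₊ < n :=
    (Nat.floor_lt (mul_nonneg hn.le (rpow_nonneg hr0 _))).2 (mul_lt_of_lt_one_right hn hratio)
  rw [mLow]; omega

theorem tendsto_floor_mUp {μ ρ : ℝ} (hμ : 0 < μ) (hρ : 0 < ρ) :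
    Tendsto (fun n : ℕ => ⌊(n : ℝ) * (lStar n / lam0 μ ρ n) ^ ((2 : ℝ) / (μ + 1))⌋₊)
      atTop atTop := by
  set C := ρ * (2 * √μ / (μ + 1)) with hC_def
  have hC : 0 < C := by positivity
  have hsmall : Tendsto (fun x => log x ^ 3 / x ^ (μ / 2)) atTop (𝓝[>] 0) := by
    refine tendsto_nhdsWithin_iff.2 ⟨tendsto_log_pow_div_rpow_atTop 3 (by positivity), ?_⟩
    filter_upwards [eventually_gt_atTop 1] with x hx
    have := log_pos hx
    exact div_pos (by positivity) (rpow_pos_of_pos (by linarith) _)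
  have hbig : Tendsto (fun x => (C⁻¹ * (log x ^ 3 / x ^ (μ / 2))⁻¹) ^ ((2 : ℝ) / (μ + 1)))
      atTop atTop :=
    (tendsto_rpow_atTop (by positivity)).comp
      (hsmall.inv_tendsto_nhdsGT_zero.const_mul_atTop (inv_pos.2 hC))
  refine tendsto_nat_floor_atTop.comp ((hbig.comp tendsto_natCast_atTop_atTop).congr' ?_)
  filter_upwards [eventually_gt_atTop 1] with n hn
  have hx : (1 : ℝ) < n := by exact_mod_cast hn
  have hx0 : (0 : ℝ) < n := by linarith
  have := log_pos hx
  have hinner : C⁻¹ * (log n ^ 3 / (n : ℝ) ^ (μ / 2))⁻¹ =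
      (n : ℝ) ^ ((μ + 1) / 2) * (lStar n / lam0 μ ρ n) := by
    rw [rpow_add_one_div_two hx0, lStar, lam0_eq, ← hC_def]
    have : 0 < √(n : ℝ) := sqrt_pos.2 hx0
    field_simp
  rw [Function.comp_apply, hinner, mul_rpow (by positivity) (by rw [lStar, lam0_eq]; positivity),
    ← inv_div, rpow_inv_rpow hx0.le (by positivity)]

theorem dLam_over_sqrt_dT_general (μ ρ : ℝ) (hμ1 : 1 ≤ μ) (hρ : 0 < ρ) :
    ∀ ε : ℝ, 0 < ε → ∃ N : ℕ, ∀ n : ℕ, N ≤ n → ∀ j : ℕ,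
      mLow μ ρ n ≤ j → j ≤ mUp μ ρ n →
        |dLam μ ρ n j * (Real.sqrt (dT μ n j))⁻¹ - ρ| < ε := by
  intro ε hε
  have hμ : 0 < μ := by linarith
  have hlim : Tendsto (fun k => ρ * (2 * √μ / (μ + 1)) * rpowIncrementRatio ((μ + 1) / 2) μ k)
      atTop (𝓝 ρ) := by
    convert (tendsto_rpowIncrementRatio (p := (μ + 1) / 2) (by ring) hμ).const_mul
      (ρ * (2 * √μ / (μ + 1))) using 2
    have : 0 < √μ := sqrt_pos.2 hμ
    field_simp
  obtain ⟨K, hK⟩ := Metric.tendsto_atTop.1 hlim ε hε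
  obtain ⟨N, hN⟩ := eventually_atTop.1 ((eventually_one_le_mLow hμ hρ).and
    ((tendsto_floor_mUp hμ hρ).eventually_ge_atTop K))
  refine ⟨N, fun n hn j hj₁ hj₂ => ?_⟩
  obtain ⟨hm₁, hK_le⟩ := hN n hn
  rw [mUp] at hj₂
  rw [dLam_mul_inv_sqrt_dT μ ρ (by omega) (by omega), ← Real.dist_eq]
  exact hK (n - j) (by omega)

theorem dLam_over_sqrt_dT (μ ρ : ℝ) (hμ1 : 1 ≤ μ) (hμ2 : μ < 2) (hρ : 0 < ρ) :
    ∀ ε : ℝ, 0 < ε → ∃ N : ℕ, ∀ n : ℕ, N ≤ n → ∀ j : ℕ,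
      mLow μ ρ n ≤ j → j ≤ mUp μ ρ n →
        |dLam μ ρ n j * (Real.sqrt (dT μ n j))⁻¹ - ρ| < ε :=
  dLam_over_sqrt_dT_general μ ρ hμ1 hρ
end

section
/- Let δ ≥ 0, let N have a Poisson distribution with parameter δ, and let (ξ_j)_{j≥1} be i.i.d. real random variables with ξ_1 > −1 almost surely and E[ξ_1²] < ∞, with N, ξ_1, ξ_2, … mutually independent. Then E[ ( ∏_{j=1}^{N} (1+ξ_j) − 1 )² ] = exp( δ E[2ξ_1 + ξ_1²] ) − 2 exp( δ E[ξ_1] ) + 1. -/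
/-!
Conditioning on `N` and using independence, `E[∏_{j<N} g(ξ_j)] = ∑_k P(N = k) (E g(ξ_1))^k`
for every nonnegative `g`, and for Poisson `N` this generating function equals
`exp(δ (E g(ξ_1) - 1))`. Since `ξ_1 > -1`, it applies to `g(x) = 1 + x` and `g(x) = (1 + x)^2`,
which give the first two moments of the product; expanding the square finishes.
-/

open MeasureTheory ProbabilityTheory

/-- The family consisting of the Poisson counter `N` (cast to ℝ) followed by the
jump sizes `ξ 0, ξ 1, …`; mutual independence of this family encodes the mutual
independence of `N, ξ₁, ξ₂, …`. -/
noncomputable def poissonJumpFamily {Ω : Type*} (N : Ω → ℕ) (ξ : ℕ → Ω → ℝ) :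
    ℕ → Ω → ℝ :=
  fun i => match i with
    | 0 => fun ω => (N ω : ℝ)
    | Nat.succ j => ξ j

open ENNReal Finset Nat

lemma hasSum_poisson_mul_pow (δ m : ℝ) :
    HasSum (fun k : ℕ => Real.exp (-δ) * δ ^ k / k ! * m ^ k) (Real.exp (δ * (m - 1))) := by
  have h := (NormedSpace.expSeries_div_hasSum_exp (δ * m)).mul_left (Real.exp (-δ))
  rw [← Real.exp_eq_exp_ℝ, ← Real.exp_add] at h
  have hterm : (fun k : ℕ => Real.exp (-δ) * δ ^ k / k ! * m ^ k)
      = fun k => Real.exp (-δ) * ((δ * m) ^ k / k !) := by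
    ext k; ring
  rw [hterm, show δ * (m - 1) = -δ + δ * m by ring]
  exact h

section

variable {Ω : Type*} [MeasurableSpace Ω] {μ : Measure Ω} {N : Ω → ℕ}
  {ξ : ℕ → Ω → ℝ}

lemma measurable_poissonJumpFamily (hN : Measurable N) (hξ : ∀ j, Measurable (ξ j)) (i : ℕ) :
    Measurable (poissonJumpFamily N ξ i) := by
  cases i with
  | zero => exact measurable_from_top.comp hN
  | succ j => exact hξ j

lemma lintegral_prod_range_mul_indicator (hN : Measurable N) (hξ : ∀ j, Measurable (ξ j))
    (hindep : iIndepFun (poissonJumpFamily N ξ) μ) {F : ℝ → ℝ≥0∞} (hF : Measurable F)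
    (k : ℕ) :
    ∫⁻ ω, (∏ j ∈ range k, F (ξ j ω)) * {ω | N ω = k}.indicator 1 ω ∂μ
      = (∏ j ∈ range k, ∫⁻ ω, F (ξ j ω) ∂μ) * μ {ω | N ω = k} := by
  -- `H 0` turns the counter into the indicator of `{N = k}`
  let H : ℕ → ℝ → ℝ≥0∞ := fun i => match i with
    | 0 => ({(k : ℝ)} : Set ℝ).indicator 1
    | _ + 1 => F
  have hH : ∀ i, Measurable (H i) := fun i => by
    cases i with
    | zero => exact measurable_one.indicator (measurableSet_singleton _)
    | succ => exact hF
  have hH0 : H 0 ∘ poissonJumpFamily N ξ 0 = {ω | N ω = k}.indicator 1 := by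
    ext ω
    simp only [H, poissonJumpFamily, Function.comp, Set.indicator_apply, Set.mem_singleton_iff,
      Set.mem_ofPred_eq, Nat.cast_inj, Pi.one_apply]
  have key := lintegral_prod_eq_prod_lintegral_of_indepFun (range (k + 1))
    (fun i => H i ∘ poissonJumpFamily N ξ i) (hindep.comp H hH)
    (fun i => (hH i).comp (measurable_poissonJumpFamily hN hξ i))
  simp only [prod_range_succ'] at key
  rwa [hH0, lintegral_indicator_one
    (show MeasurableSet {ω | N ω = k} from hN (measurableSet_singleton k))] at key

lemma lintegral_prod_range_eq_tsum (hN : Measurable N) (hξ : ∀ j, Measurable (ξ j))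
    (hindep : iIndepFun (poissonJumpFamily N ξ) μ) {F : ℝ → ℝ≥0∞} (hF : Measurable F) :
    ∫⁻ ω, ∏ j ∈ range (N ω), F (ξ j ω) ∂μ
      = ∑' k, (∏ j ∈ range k, ∫⁻ ω, F (ξ j ω) ∂μ) * μ {ω | N ω = k} := by
  have hsplit : ∀ ω, ∏ j ∈ range (N ω), F (ξ j ω)
      = ∑' k, (∏ j ∈ range k, F (ξ j ω)) * {ω | N ω = k}.indicator 1 ω := fun ω => by
    rw [tsum_eq_single (N ω) fun k hk => ?_]
    · simp only [Set.indicator_of_mem (show ω ∈ {ω' | N ω' = N ω} from rfl), Pi.one_apply,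
        mul_one]
    · rw [Set.indicator_of_notMem (show ω ∉ {ω' | N ω' = k} from Ne.symm hk), mul_zero]
  have hmeas : ∀ k,
      Measurable fun ω => (∏ j ∈ range k, F (ξ j ω)) * {ω | N ω = k}.indicator 1 ω :=
    fun k => (Finset.measurable_prod _ fun j _ => hF.comp (hξ j)).mul
      (measurable_one.indicator (hN (measurableSet_singleton k)))
  rw [lintegral_congr hsplit, lintegral_tsum fun k => (hmeas k).aemeasurable]
  exact tsum_congr (lintegral_prod_range_mul_indicator hN hξ hindep hF)

lemma lintegral_prod_range_ofReal_eq_exp {δ : ℝ} (hδ : 0 ≤ δ) (hN : Measurable N)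
    (hξ : ∀ j, Measurable (ξ j))
    (hNpois : ∀ k : ℕ, μ {ω | N ω = k} = ENNReal.ofReal (Real.exp (-δ) * δ ^ k / k !))
    (hident : ∀ j, IdentDistrib (ξ j) (ξ 0) μ μ)
    (hindep : iIndepFun (poissonJumpFamily N ξ) μ)
    {f : ℝ → ℝ} (hf : Measurable f) (hnn : ∀ᵐ ω ∂μ, 0 ≤ f (ξ 0 ω))
    (hint : Integrable (fun ω => f (ξ 0 ω)) μ) :
    ∫⁻ ω, ∏ j ∈ range (N ω), ENNReal.ofReal (f (ξ j ω)) ∂μ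
      = ENNReal.ofReal (Real.exp (δ * (∫ ω, f (ξ 0 ω) ∂μ - 1))) := by
  have hfactor : ∀ j, ∫⁻ ω, ENNReal.ofReal (f (ξ j ω)) ∂μ
      = ENNReal.ofReal (∫ ω, f (ξ 0 ω) ∂μ) := fun j => by
    rw [ofReal_integral_eq_lintegral_ofReal hint hnn]
    exact ((hident j).comp (ENNReal.measurable_ofReal.comp hf)).lintegral_eq
  have hm : 0 ≤ ∫ ω, f (ξ 0 ω) ∂μ := integral_nonneg_of_ae hnn
  have hsum := (hasSum_poisson_mul_pow δ (∫ ω, f (ξ 0 ω) ∂μ)).summable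
  rw [lintegral_prod_range_eq_tsum (F := fun x => ENNReal.ofReal (f x)) hN hξ hindep
    (ENNReal.measurable_ofReal.comp hf)]
  simp only [hfactor, prod_const, card_range, hNpois]
  rw [← (hasSum_poisson_mul_pow δ _).tsum_eq,
    ENNReal.ofReal_tsum_of_nonneg (fun k => by positivity) hsum]
  refine tsum_congr fun k => ?_
  rw [← ENNReal.ofReal_pow hm, ← ENNReal.ofReal_mul' (by positivity), mul_comm]

lemma integrable_prod_range_and_integral_eq_exp {δ : ℝ} (hδ : 0 ≤ δ) (hN : Measurable N)
    (hξ : ∀ j, Measurable (ξ j))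
    (hNpois : ∀ k : ℕ, μ {ω | N ω = k} = ENNReal.ofReal (Real.exp (-δ) * δ ^ k / k !))
    (hident : ∀ j, IdentDistrib (ξ j) (ξ 0) μ μ)
    (hindep : iIndepFun (poissonJumpFamily N ξ) μ)
    {f : ℝ → ℝ} (hf : Measurable f) (hnn : ∀ᵐ ω ∂μ, 0 ≤ f (ξ 0 ω))
    (hint : Integrable (fun ω => f (ξ 0 ω)) μ) :
    Integrable (fun ω => ∏ j ∈ range (N ω), f (ξ j ω)) μ ∧
      ∫ ω, ∏ j ∈ range (N ω), f (ξ j ω) ∂μ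
        = Real.exp (δ * (∫ ω, f (ξ 0 ω) ∂μ - 1)) := by
  have hnn_all : ∀ᵐ ω ∂μ, ∀ j, 0 ≤ f (ξ j ω) := ae_all_iff.2 fun j =>
    (hident j).symm.ae_snd (p := fun x => 0 ≤ f x) (measurableSet_le measurable_const hf) hnn
  have hprod_nn : ∀ᵐ ω ∂μ, 0 ≤ ∏ j ∈ range (N ω), f (ξ j ω) := by
    filter_upwards [hnn_all] with ω hω
    exact prod_nonneg fun j _ => hω j
  have hprod_meas : Measurable fun ω => ∏ j ∈ range (N ω), f (ξ j ω) :=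
    (measurable_from_prod_countable_left
      (f := fun p : Ω × ℕ => ∏ j ∈ range p.2, f (ξ j p.1))
      fun n => Finset.measurable_prod (range n) fun j _ => hf.comp (hξ j)).comp
      (measurable_id.prodMk hN)
  have hlint : ∫⁻ ω, ENNReal.ofReal (∏ j ∈ range (N ω), f (ξ j ω)) ∂μ
      = ENNReal.ofReal (Real.exp (δ * (∫ ω, f (ξ 0 ω) ∂μ - 1))) := by
    rw [← lintegral_prod_range_ofReal_eq_exp hδ hN hξ hNpois hident hindep hf hnn hint]
    refine lintegral_congr_ae ?_
    filter_upwards [hnn_all] with ω hω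
    exact ENNReal.ofReal_prod_of_nonneg fun j _ => hω j
  refine ⟨⟨hprod_meas.aestronglyMeasurable, ?_⟩, ?_⟩
  · rw [hasFiniteIntegral_iff_ofReal hprod_nn, hlint]
    exact ofReal_lt_top
  · rw [integral_eq_lintegral_of_nonneg_ae hprod_nn hprod_meas.aestronglyMeasurable, hlint,
      toReal_ofReal (Real.exp_nonneg _)]

lemma integral_sub_one_sq [IsProbabilityMeasure μ] {P : Ω → ℝ} (hP : Integrable P μ)
    (hP2 : Integrable (fun ω => P ω ^ 2) μ) :
    ∫ ω, (P ω - 1) ^ 2 ∂μ = ∫ ω, P ω ^ 2 ∂μ - 2 * ∫ ω, P ω ∂μ + 1 := by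
  have hexpand : (fun ω => (P ω - 1) ^ 2) = fun ω => P ω ^ 2 - 2 * P ω + 1 := by
    ext ω; ring
  have hP2_sub : Integrable (fun ω => P ω ^ 2 - 2 * P ω) μ := hP2.sub (hP.const_mul 2)
  rw [hexpand, integral_add hP2_sub (integrable_const 1), integral_sub hP2 (hP.const_mul 2),
    integral_const_mul, integral_const, probReal_univ, one_smul]

end

theorem compound_poisson_product_centered_square
    {Ω : Type*} [MeasureSpace Ω] [IsProbabilityMeasure (ℙ : Measure Ω)]
    (δ : ℝ) (hδ : 0 ≤ δ) (N : Ω → ℕ) (ξ : ℕ → Ω → ℝ)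
    (hNmeas : Measurable N) (hξmeas : ∀ j, Measurable (ξ j))
    (hNpois : ∀ k : ℕ,
      ℙ {ω | N ω = k} = ENNReal.ofReal (Real.exp (-δ) * δ ^ k / (Nat.factorial k)))
    (hident : ∀ j, Measure.map (ξ j) ℙ = Measure.map (ξ 0) ℙ)
    (hindep : iIndepFun
      (poissonJumpFamily N ξ) ℙ)
    (hpos : ∀ᵐ ω ∂ℙ, -1 < ξ 0 ω)
    (hsq : Integrable (fun ω => (ξ 0 ω) ^ 2) ℙ) :
    ∫ ω, ((∏ j ∈ Finset.range (N ω), (1 + ξ j ω)) - 1) ^ 2 ∂ℙ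
      = Real.exp (δ * ∫ ω, (2 * ξ 0 ω + (ξ 0 ω) ^ 2) ∂ℙ)
        - 2 * Real.exp (δ * ∫ ω, ξ 0 ω ∂ℙ) + 1 := by
  have hiid : ∀ j, IdentDistrib (ξ j) (ξ 0) ℙ ℙ :=
    fun j => ⟨(hξmeas j).aemeasurable, (hξmeas 0).aemeasurable, hident j⟩
  have hξint : Integrable (ξ 0) ℙ :=
    ((memLp_two_iff_integrable_sq (hξmeas 0).aestronglyMeasurable).2 hsq).integrable one_le_two
  have hsq_expand : (fun ω => (1 + ξ 0 ω) ^ 2) = fun ω => 1 + (2 * ξ 0 ω + ξ 0 ω ^ 2) := by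
    ext ω; ring
  have hmix : Integrable (fun ω => 2 * ξ 0 ω + ξ 0 ω ^ 2) ℙ := (hξint.const_mul 2).add hsq
  obtain ⟨hP1, hEP1⟩ := integrable_prod_range_and_integral_eq_exp hδ hNmeas hξmeas hNpois hiid
    hindep (f := fun x => 1 + x) (by fun_prop)
    (by filter_upwards [hpos] with ω hω; linarith) ((integrable_const 1).add hξint)
  obtain ⟨hP2, hEP2⟩ := integrable_prod_range_and_integral_eq_exp hδ hNmeas hξmeas hNpois hiid
    hindep (f := fun x => (1 + x) ^ 2) (by fun_prop) (ae_of_all _ fun _ => sq_nonneg _)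
    (by rw [hsq_expand]; exact (integrable_const 1).add hmix)
  simp only [prod_pow] at hP2 hEP2
  rw [integral_sub_one_sq hP1 hP2, hEP1, hEP2, hsq_expand, integral_add (integrable_const 1) hξint,
    integral_add (integrable_const 1) hmix]
  simp
end
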